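/- Let Ω be a domain in an almost complex manifold admitting a continuous bounded strictly plurisubharmonic exhaustion function ρ : Ω → [a, 0). Then Ω is disc-convex: for every Hartogs family D : closure(𝔻) × [0,1] → M (each D_t J-holomorphic on 𝔻, continuous on the closed disc, with closure(D_t(𝔻)) ⊆ Ω for t ∈ (0,1] and D_0(b𝔻) ⊆ Ω), the limiting disc satisfies D_0(𝔻) ⊆ Ω. -/

import Mathlib

open Metric intervalIntegral

/-- A function is subharmonic on a set if it is continuous there and satisfies the sub-mean-value
inequality on every closed disc contained in the set. -/
noncomputable def SubharmonicOn (u : ℂ → ℝ) (s : Set ℂ) : Prop :=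
  ContinuousOn u s ∧ ∀ c : ℂ, ∀ R : ℝ, 0 < R → closedBall c R ⊆ s →
    u c ≤ (2 * Real.pi)⁻¹
      * ∫ θ in (0 : ℝ)..(2 * Real.pi), u (c + (R : ℂ) * Complex.exp ((θ : ℂ) * Complex.I))

/-- `f` is J-holomorphic on `s`: smooth on `s` and `df ∘ J_st = J ∘ df` on `s`. -/
def JHolOn {E : Type*} [NormedAddCommGroup E] [NormedSpace ℝ E]
    (J : E → (E →L[ℝ] E)) (f : ℂ → E) (s : Set ℂ) : Prop :=
  ContDiffOn ℝ (⊤ : ℕ∞) f s ∧ ∀ ζ ∈ s, ∀ w : ℂ,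
    fderiv ℝ f ζ (Complex.I * w) = J (f ζ) (fderiv ℝ f ζ w)

lemma maxPrinciple (u : ℂ → ℝ) (hc : ContinuousOn u (closedBall (0:ℂ) 1))
    (hm : ∀ c : ℂ, ∀ R : ℝ, 0 < R → closedBall c R ⊆ ball (0:ℂ) 1 →
      u c ≤ (2 * Real.pi)⁻¹
        * ∫ θ in (0:ℝ)..(2*Real.pi), u (c + (R : ℂ) * Complex.exp ((θ : ℂ) * Complex.I)))
    (b : ℝ) (hb : ∀ ζ ∈ sphere (0:ℂ) 1, u ζ ≤ b) :
    ∀ ζ ∈ ball (0:ℂ) 1, u ζ ≤ b := by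
  obtain ⟨z₀, hz₀mem, hz₀max⟩ :=
    (isCompact_closedBall (0:ℂ) 1).exists_isMaxOn ⟨0, by simp⟩ hc
  set M := u z₀ with hM
  by_cases hMb : M ≤ b
  · exact fun ζ hζ => le_trans (hz₀max (ball_subset_closedBall hζ)) hMb
  push_neg at hMb
  exfalso
  set S : Set ℂ := closedBall (0:ℂ) 1 ∩ u ⁻¹' {M} with hS
  have hSne : S.Nonempty := ⟨z₀, hz₀mem, rfl⟩
  have hSclosed : IsClosed S :=
    hc.preimage_isClosed_of_isClosed Metric.isClosed_closedBall isClosed_singleton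
  have hSball : S ⊆ ball (0:ℂ) 1 := by
    rintro z ⟨hz1, hz2⟩
    have hz2' : u z = M := hz2
    rcases lt_or_eq_of_le (mem_closedBall.mp hz1) with h | h
    · exact mem_ball.mpr h
    · exfalso
      have hub := hb z (mem_sphere.mpr h)
      rw [hz2'] at hub
      exact absurd hub (not_le.mpr hMb)
  have hSopen : IsOpen S := by
    rw [isOpen_iff]
    intro c hcS
    have hcball : c ∈ ball (0:ℂ) 1 := hSball hcS
    have hcnorm : dist c 0 < 1 := mem_ball.mp hcball
    set ε : ℝ := (1 - dist c 0) / 2 with hε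
    have hεpos : 0 < ε := by simp only [hε]; linarith
    refine ⟨ε, hεpos, ?_⟩
    intro z hz
    by_cases hzc : z = c
    · rwa [hzc]
    set R : ℝ := dist z c with hR
    have hRpos : 0 < R := dist_pos.mpr hzc
    have hRε : R < ε := mem_ball.mp hz
    have hsub : closedBall c R ⊆ ball (0:ℂ) 1 := by
      intro w hw
      have : dist w 0 ≤ dist w c + dist c 0 := dist_triangle w c 0
      have hwc : dist w c ≤ R := mem_closedBall.mp hw
      rw [mem_ball]
      nlinarith [dist_nonneg (x := c) (y := (0:ℂ))]
    -- circle map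
    set g : ℝ → ℝ := fun θ => u (c + (R : ℂ) * Complex.exp ((θ : ℂ) * Complex.I)) with hg
    have hcirc : ∀ θ : ℝ, c + (R : ℂ) * Complex.exp ((θ : ℂ) * Complex.I) ∈ ball (0:ℂ) 1 := by
      intro θ
      apply hsub
      rw [mem_closedBall]
      simp [dist_eq_norm, Complex.norm_exp_ofReal_mul_I, abs_of_pos hRpos]
    have hgcont : Continuous g := by
      apply hc.comp_continuous
      · exact continuous_const.add (continuous_const.mul
          (Complex.continuous_exp.comp (Complex.continuous_ofReal.mul continuous_const)))
      · exact fun θ => ball_subset_closedBall (hcirc θ)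
    have hgle : ∀ θ : ℝ, g θ ≤ M := fun θ => hz₀max (ball_subset_closedBall (hcirc θ))
    have hmean : M ≤ (2 * Real.pi)⁻¹ * ∫ θ in (0:ℝ)..(2*Real.pi), g θ := by
      have := hm c R hRpos hsub
      rwa [hcS.2] at this
      -- hcS.2 : u c = M ; hm gives u c ≤ ...
    have h2pi : (0:ℝ) < 2 * Real.pi := by positivity
    have hintle : ∫ θ in (0:ℝ)..(2*Real.pi), g θ ≤ 2 * Real.pi * M := by
      calc ∫ θ in (0:ℝ)..(2*Real.pi), g θ ≤ ∫ θ in (0:ℝ)..(2*Real.pi), M := by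
            apply intervalIntegral.integral_mono_on h2pi.le
              (hgcont.intervalIntegrable _ _) (intervalIntegrable_const)
            exact fun x _ => hgle x
        _ = 2 * Real.pi * M := by simp
    have hintge : 2 * Real.pi * M ≤ ∫ θ in (0:ℝ)..(2*Real.pi), g θ := by
      have h := mul_le_mul_of_nonneg_left hmean h2pi.le
      rwa [← mul_assoc, mul_inv_cancel₀ (ne_of_gt h2pi), one_mul] at h
    -- so ∫ (M - g) = 0 ; show g θ = M for all θ
    have hgeq : ∀ θ : ℝ, g θ = M := by
      by_contra hcon
      push_neg at hcon
      obtain ⟨θ₀, hθ₀⟩ := hcon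
      have hθ₀lt : g θ₀ < M := lt_of_le_of_ne (hgle θ₀) hθ₀
      set φ : ℝ → ℝ := fun θ => M - g θ with hφ
      have hφcont : Continuous φ := continuous_const.sub hgcont
      have hφnn : ∀ θ, 0 ≤ φ θ := fun θ => sub_nonneg.mpr (hgle θ)
      -- periodicity : φ (θ + 2π) = φ θ
      have hper : ∀ θ : ℝ, φ (θ + 2 * Real.pi) = φ θ := by
        intro θ
        simp only [hφ, hg]
        congr 3
        push_cast
        rw [add_mul, Complex.exp_add]
        simp [Complex.exp_two_pi_mul_I]
      -- find τ ∈ [0, 2π] with φ τ > 0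
      have hφper : Function.Periodic φ (2 * Real.pi) := hper
      obtain ⟨τ, hτmem', hτeq⟩ := hφper.exists_mem_Ico₀ h2pi θ₀
      have hτmem : τ ∈ Set.Icc (0:ℝ) (2*Real.pi) := ⟨hτmem'.1, hτmem'.2.le⟩
      have hτpos : 0 < φ τ := by rw [← hτeq]; simpa [φ] using sub_pos.mpr hθ₀lt
      -- open set of positivity intersects Ioo 0 (2π)
      have hVopen : IsOpen {θ : ℝ | 0 < φ θ} := isOpen_lt continuous_const hφcont
      have hclos : τ ∈ closure (Set.Ioo (0:ℝ) (2*Real.pi)) := by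
        rwa [closure_Ioo (ne_of_lt h2pi)]
      obtain ⟨σ, hσV, hσIoo⟩ :=
        mem_closure_iff_nhds.mp hclos _ (hVopen.mem_nhds hτpos)
      have hpos : 0 < ∫ θ in Set.Ioo (0:ℝ) (2*Real.pi), φ θ := by
        rw [MeasureTheory.setIntegral_pos_iff_support_of_nonneg_ae
          (Filter.Eventually.of_forall hφnn : 0 ≤ᵐ[_] φ)
          ((hφcont.integrableOn_Icc).mono_set Set.Ioo_subset_Icc_self)]
        apply lt_of_lt_of_le _ (MeasureTheory.measure_mono
          (Set.inter_subset_inter_left _ (fun x (hx : 0 < φ x) => ne_of_gt hx)))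
        exact (hVopen.inter isOpen_Ioo).measure_pos _ ⟨σ, hσV, hσIoo⟩
      have hint0 : ∫ θ in Set.Ioo (0:ℝ) (2*Real.pi), φ θ ≤ 0 := by
        have : ∫ θ in Set.Ioo (0:ℝ) (2*Real.pi), φ θ
            = ∫ θ in (0:ℝ)..(2*Real.pi), φ θ := by
          rw [intervalIntegral.integral_of_le h2pi.le,
            MeasureTheory.integral_Ioc_eq_integral_Ioo]
        rw [this, intervalIntegral.integral_sub intervalIntegrable_const
          (hgcont.intervalIntegrable _ _)]
        simp only [intervalIntegral.integral_const, smul_eq_mul, sub_zero]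
        linarith [hintge]
      linarith
    -- conclude z ∈ S
    have habs : ‖z - c‖ = R := by
      rw [hR, dist_eq_norm]
    have hzeq : z = c + (R : ℂ) * Complex.exp (((z - c).arg : ℂ) * Complex.I) := by
      rw [← habs]
      rw [Complex.norm_mul_exp_arg_mul_I (z - c)]
      ring
    constructor
    · exact ball_subset_closedBall (hsub (mem_closedBall.mpr le_rfl))
    · show u z = M
      rw [hzeq]
      exact hgeq _
  have := (isClopen_iff.mp ⟨hSclosed, hSopen⟩)
  rcases this with h | h
  · exact hSne.ne_empty h
  · have : (4:ℂ) ∈ S := h ▸ Set.mem_univ _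
    have := this.1
    rw [mem_closedBall] at this
    simp [dist_eq_norm] at this

/- STATEMENT 17: let `Ω` be a domain in an almost complex manifold admitting a continuous bounded
strictly plurisubharmonic exhaustion function `ρ : Ω → [a,0)` (here: continuous, with compact
sublevel sets, whose composition with every J-holomorphic disc in `Ω` is subharmonic).  Then `Ω`
is disc-convex: for every Hartogs family `D : 𝔻̄ × [0,1] → M` (jointly continuous, each `D_t`
J-holomorphic on `𝔻`, `closure (D_t(𝔻)) ⊆ Ω` for `t ∈ (0,1]`, and `D_0(b𝔻) ⊆ Ω`), one has
`D_0(𝔻) ⊆ Ω`. -/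
theorem stmt17 {E : Type*} [NormedAddCommGroup E] [NormedSpace ℝ E] [FiniteDimensional ℝ E]
    (J : E → (E →L[ℝ] E)) (hJs : ContDiff ℝ (⊤ : ℕ∞) J)
    (hJ2 : ∀ p v, J p (J p v) = -v)
    (Ω : Set E) (hΩo : IsOpen Ω)
    (ρ : E → ℝ) (a : ℝ) (ha : a < 0)
    (hρC : ContinuousOn ρ Ω)
    (hrange : ∀ p ∈ Ω, ρ p ∈ Set.Ico a 0)
    (hexh : ∀ b : ℝ, b < 0 → IsCompact {p ∈ Ω | ρ p ≤ b})
    (hsub : ∀ f : ℂ → E, JHolOn J f (ball (0 : ℂ) 1) → f '' ball (0 : ℂ) 1 ⊆ Ω →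
      SubharmonicOn (fun ζ => ρ (f ζ)) (ball (0 : ℂ) 1))
    (D : ℝ → ℂ → E)
    (hDc : ContinuousOn (fun q : ℝ × ℂ => D q.1 q.2)
      (Set.Icc (0 : ℝ) 1 ×ˢ closedBall (0 : ℂ) 1))
    (hDhol : ∀ t ∈ Set.Icc (0 : ℝ) 1, JHolOn J (D t) (ball (0 : ℂ) 1))
    (hDin : ∀ t ∈ Set.Ioc (0 : ℝ) 1, closure (D t '' ball (0 : ℂ) 1) ⊆ Ω)
    (hD0b : D 0 '' sphere (0 : ℂ) 1 ⊆ Ω) :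
    D 0 '' ball (0 : ℂ) 1 ⊆ Ω := by
  -- continuity of each slice on the closed ball
  have hDt : ∀ t ∈ Set.Icc (0:ℝ) 1, ContinuousOn (D t) (closedBall (0:ℂ) 1) := by
    intro t ht
    exact hDc.comp (Continuous.continuousOn (continuous_const.prodMk continuous_id))
      (fun ζ hζ => ⟨ht, hζ⟩)
  have hclos : closedBall (0:ℂ) 1 = closure (ball (0:ℂ) 1) :=
    (closure_ball (0:ℂ) one_ne_zero).symm
  have himg : ∀ t ∈ Set.Ioc (0:ℝ) 1, D t '' closedBall (0:ℂ) 1 ⊆ Ω := by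
    intro t ht
    have h1 : D t '' closedBall (0:ℂ) 1 ⊆ closure (D t '' ball (0:ℂ) 1) := by
      rw [hclos]
      exact ContinuousOn.image_closure (by rw [← hclos]; exact hDt t ⟨ht.1.le, ht.2⟩)
    exact h1.trans (hDin t ht)
  have hmapΩ : ∀ q ∈ Set.Icc (0:ℝ) 1 ×ˢ sphere (0:ℂ) 1, D q.1 q.2 ∈ Ω := by
    rintro ⟨t, ζ⟩ ⟨ht, hζ⟩
    rcases eq_or_lt_of_le ht.1 with h0 | h0
    · rw [← h0]; exact hD0b ⟨ζ, hζ, rfl⟩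
    · exact himg t ⟨h0, ht.2⟩ ⟨ζ, sphere_subset_closedBall hζ, rfl⟩
  -- max of ρ ∘ D on the compact boundary family
  have hCcomp : IsCompact (Set.Icc (0:ℝ) 1 ×ˢ sphere (0:ℂ) 1) :=
    isCompact_Icc.prod (isCompact_sphere _ _)
  have hCne : (Set.Icc (0:ℝ) 1 ×ˢ sphere (0:ℂ) 1).Nonempty :=
    ⟨(0, 1), ⟨le_refl 0, zero_le_one⟩, by simp⟩
  have hcont : ContinuousOn (fun q : ℝ × ℂ => ρ (D q.1 q.2))
      (Set.Icc (0:ℝ) 1 ×ˢ sphere (0:ℂ) 1) :=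
    hρC.comp (hDc.mono (Set.prod_mono le_rfl sphere_subset_closedBall)) hmapΩ
  obtain ⟨q₀, hq₀C, hq₀max⟩ := hCcomp.exists_isMaxOn hCne hcont
  set b := ρ (D q₀.1 q₀.2) with hbdef
  have hb0 : b < 0 := (hrange _ (hmapΩ q₀ hq₀C)).2
  -- interior bound via the maximum principle
  have hint : ∀ t ∈ Set.Ioc (0:ℝ) 1, ∀ ζ ∈ ball (0:ℂ) 1, ρ (D t ζ) ≤ b := by
    intro t ht
    have htI : t ∈ Set.Icc (0:ℝ) 1 := ⟨ht.1.le, ht.2⟩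
    have hsubh := hsub (D t) (hDhol t htI)
      ((Set.image_mono ball_subset_closedBall).trans (himg t ht))
    have hu : ContinuousOn (fun ζ => ρ (D t ζ)) (closedBall (0:ℂ) 1) :=
      hρC.comp (hDt t htI) (fun ζ hζ => himg t ht ⟨ζ, hζ, rfl⟩)
    exact maxPrinciple _ hu hsubh.2 b
      (fun ζ hζ => hq₀max (Set.mk_mem_prod htI hζ))
  -- pass to the limit t → 0⁺
  rintro _ ⟨ζ₀, hζ₀, rfl⟩
  have hKcl : IsClosed {p ∈ Ω | ρ p ≤ b} := (hexh b hb0).isClosed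
  have hmem : ∀ t ∈ Set.Ioc (0:ℝ) 1, D t ζ₀ ∈ {p ∈ Ω | ρ p ≤ b} := fun t ht =>
    ⟨hDin t ht (subset_closure ⟨ζ₀, hζ₀, rfl⟩), hint t ht ζ₀ hζ₀⟩
  have hcontt : ContinuousOn (fun t : ℝ => D t ζ₀) (Set.Icc (0:ℝ) 1) :=
    hDc.comp (Continuous.continuousOn (continuous_id.prodMk continuous_const))
      (fun t ht => ⟨ht, ball_subset_closedBall hζ₀⟩)
  haveI hnb : (nhdsWithin (0:ℝ) (Set.Ioc (0:ℝ) 1)).NeBot :=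
    mem_closure_iff_nhdsWithin_neBot.mp
      (by rw [closure_Ioc (by norm_num : (0:ℝ) ≠ 1)]; exact ⟨le_rfl, zero_le_one⟩)
  have htend : Filter.Tendsto (fun t : ℝ => D t ζ₀)
      (nhdsWithin (0:ℝ) (Set.Ioc (0:ℝ) 1)) (nhds (D 0 ζ₀)) :=
    (hcontt 0 ⟨le_rfl, zero_le_one⟩).mono_left
      (nhdsWithin_mono _ Set.Ioc_subset_Icc_self)
  have hfin : D 0 ζ₀ ∈ {p ∈ Ω | ρ p ≤ b} :=
    hKcl.mem_of_tendsto htend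
      (Filter.eventually_iff_exists_mem.mpr
        ⟨Set.Ioc (0:ℝ) 1, self_mem_nhdsWithin, hmem⟩)
  exact hfin.1
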